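/- In the partizan subtraction game with S_L = {1,2} and S_R = {1,3}, for every heap size n ≥ 4 the outcome is L, i.e., Left wins both moving first and moving second. -/
import Mathlib


mutual
def LeftFirstWins (SL SR : Finset ℕ) : ℕ → Prop
  | n => ∃ s ∈ SL, ∃ (_ : 0 < s) (_ : s ≤ n), ¬ RightFirstWins SL SR (n - s)
  termination_by n => n
  decreasing_by omega
def RightFirstWins (SL SR : Finset ℕ) : ℕ → Prop
  | n => ∃ s ∈ SR, ∃ (_ : 0 < s) (_ : s ≤ n), ¬ LeftFirstWins SL SR (n - s)
  termination_by n => n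
  decreasing_by omega
end

inductive Outcome | P | L | R | N
deriving DecidableEq

open Classical in
noncomputable def outcome (SL SR : Finset ℕ) (n : ℕ) : Outcome :=
  if LeftFirstWins SL SR n then
    if RightFirstWins SL SR n then .N else .L
  else
    if RightFirstWins SL SR n then .R else .P

lemma Lw_iff (n : ℕ) : LeftFirstWins {1,2} {1,3} n ↔
    (1 ≤ n ∧ ¬ RightFirstWins {1,2} {1,3} (n-1)) ∨
    (2 ≤ n ∧ ¬ RightFirstWins {1,2} {1,3} (n-2)) := by
  rw [LeftFirstWins]
  constructor
  · rintro ⟨s, hs, hpos, hle, h⟩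
    simp only [Finset.mem_insert, Finset.mem_singleton] at hs
    rcases hs with rfl | rfl
    · exact Or.inl ⟨hle, h⟩
    · exact Or.inr ⟨hle, h⟩
  · rintro (⟨h1, h⟩ | ⟨h2, h⟩)
    · exact ⟨1, by simp, by omega, h1, h⟩
    · exact ⟨2, by simp, by omega, h2, h⟩

lemma Rw_iff (n : ℕ) : RightFirstWins {1,2} {1,3} n ↔
    (1 ≤ n ∧ ¬ LeftFirstWins {1,2} {1,3} (n-1)) ∨
    (3 ≤ n ∧ ¬ LeftFirstWins {1,2} {1,3} (n-3)) := by
  rw [RightFirstWins]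
  constructor
  · rintro ⟨s, hs, hpos, hle, h⟩
    simp only [Finset.mem_insert, Finset.mem_singleton] at hs
    rcases hs with rfl | rfl
    · exact Or.inl ⟨hle, h⟩
    · exact Or.inr ⟨hle, h⟩
  · rintro (⟨h1, h⟩ | ⟨h3, h⟩)
    · exact ⟨1, by simp, by omega, h1, h⟩
    · exact ⟨3, by simp, by omega, h3, h⟩

lemma Lw0 : ¬ LeftFirstWins {1,2} {1,3} 0 := by rw [Lw_iff]; omega
lemma Rw0 : ¬ RightFirstWins {1,2} {1,3} 0 := by rw [Rw_iff]; omega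
lemma Lw1 : LeftFirstWins {1,2} {1,3} 1 := by rw [Lw_iff]; exact Or.inl ⟨le_refl 1, Rw0⟩
lemma Rw1 : RightFirstWins {1,2} {1,3} 1 := by rw [Rw_iff]; exact Or.inl ⟨le_refl 1, Lw0⟩
lemma Lw2 : LeftFirstWins {1,2} {1,3} 2 := by rw [Lw_iff]; exact Or.inr ⟨le_refl 2, Rw0⟩
lemma Rw2 : ¬ RightFirstWins {1,2} {1,3} 2 := by
  rw [Rw_iff]; rintro (⟨_, h⟩ | ⟨h, _⟩); exacts [h Lw1, by omega]
lemma Lw3 : LeftFirstWins {1,2} {1,3} 3 := by rw [Lw_iff]; exact Or.inl ⟨by omega, Rw2⟩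

theorem stmt_0 (n : ℕ) (hn : 4 ≤ n) :
    LeftFirstWins {1, 2} {1, 3} n ∧ ¬ RightFirstWins {1, 2} {1, 3} n := by
  induction n using Nat.strong_induction_on with
  | _ n ih =>
    have hLw : ∀ m, 1 ≤ m → m < n → LeftFirstWins {1,2} {1,3} m := by
      intro m h1 hlt
      rcases lt_or_ge m 4 with h | h
      · interval_cases m
        exacts [Lw1, Lw2, Lw3]
      · exact (ih m hlt h).1
    have hR : ¬ RightFirstWins {1,2} {1,3} n := by
      rw [Rw_iff]
      rintro (⟨h1, h⟩ | ⟨h3, h⟩)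
      · exact h (hLw (n-1) (by omega) (by omega))
      · exact h (hLw (n-3) (by omega) (by omega))
    refine ⟨?_, hR⟩
    rw [Lw_iff]
    rcases eq_or_lt_of_le hn with rfl | h5
    · exact Or.inr ⟨by omega, Rw2⟩
    · exact Or.inl ⟨by omega, (ih (n-1) (by omega) (by omega)).2⟩
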